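/- (Strong completeness of S) For every set of formulas Γ and every formula A of L⊃: if Γ ⊨ A with respect to S-models, then Γ ⊢ A in the Hilbert system S. -/

import Mathlib

/-- Formulas of the language L⊃ : propositional variables with ∧, ∨,
    intuitionistic → (`imp`) and classical ⊃ (`sup`). -/
inductive Formula : Type
  | var : ℕ → Formula
  | and : Formula → Formula → Formula
  | or  : Formula → Formula → Formula
  | imp : Formula → Formula → Formula
  | sup : Formula → Formula → Formula

/-- An S-model ⟨g, W, ≤, V⟩. -/
structure SModel where
  W : Type
  le : W → W → Prop
  refl : ∀ w, le w w
  trans : ∀ u v w, le u v → le v w → le u w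
  g : W
  least : ∀ w, le g w
  V : W → ℕ → Prop
  hered : ∀ w₁ w₂ p, V w₁ p → le w₁ w₂ → V w₂ p

/-- The interpretation I : `M.sat A w` means I(w, A) = 1. -/
def SModel.sat (M : SModel) : Formula → M.W → Prop
  | .var p, w => M.V w p
  | .and A B, w => M.sat A w ∧ M.sat B w
  | .or A B, w => M.sat A w ∨ M.sat B w
  | .sup A B, w => ¬ M.sat A M.g ∨ M.sat B w
  | .imp A B, w => ∀ x, M.le w x → M.sat A x → M.sat B x

/-- Semantic consequence: Γ ⊨ A. -/
def SConseq (Γ : Set Formula) (A : Formula) : Prop :=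
  ∀ M : SModel, (∀ B ∈ Γ, M.sat B M.g) → M.sat A M.g

/-- The Hilbert system S : `SDeriv Γ A` means Γ ⊢ A. -/
inductive SDeriv : Set Formula → Formula → Prop
  | hyp {Γ A} : A ∈ Γ → SDeriv Γ A
  | ax1 {Γ} (A B : Formula) : SDeriv Γ (A.imp (B.imp A))
  | ax2 {Γ} (A B C : Formula) :
      SDeriv Γ ((A.imp (B.imp C)).imp ((A.imp B).imp (A.imp C)))
  | ax3 {Γ} (A B : Formula) : SDeriv Γ ((A.and B).imp A)
  | ax4 {Γ} (A B : Formula) : SDeriv Γ ((A.and B).imp B)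
  | ax5 {Γ} (A B C : Formula) :
      SDeriv Γ ((C.imp A).imp ((C.imp B).imp (C.imp (A.and B))))
  | ax6 {Γ} (A B : Formula) : SDeriv Γ (A.imp (A.or B))
  | ax7 {Γ} (A B : Formula) : SDeriv Γ (B.imp (A.or B))
  | ax8 {Γ} (A B C : Formula) :
      SDeriv Γ ((A.imp C).imp ((B.imp C).imp ((A.or B).imp C)))
  | axM1 {Γ} (A B : Formula) : SDeriv Γ ((A.imp B).sup (A.sup B))
  | axM2 {Γ} (A B C : Formula) :
      SDeriv Γ ((A.sup (B.sup C)).imp ((A.sup B).sup (A.sup C)))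
  | axM3 {Γ} (A B C : Formula) :
      SDeriv Γ ((A.sup (B.imp C)).imp (B.imp (A.sup C)))
  | axM4 {Γ} (A B C : Formula) :
      SDeriv Γ ((A.imp (B.sup C)).imp (B.sup (A.imp C)))
  | axM5 {Γ} (A B C : Formula) :
      SDeriv Γ (((A.sup B).sup C).imp ((A.sup C).imp C))
  | axM6 {Γ} (A B C : Formula) :
      SDeriv Γ ((A.sup C).imp ((B.sup C).imp ((A.or B).sup C)))
  | mp {Γ A B} : SDeriv Γ A → SDeriv Γ (A.sup B) → SDeriv Γ B

/-!
If `Γ ⊬ A`, extend `Γ` to a set `G` maximal among those not deriving `A`. The deduction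
theorem for `⊃` makes `G` deductively closed, and AxM5 then gives `B ⊃ C ∈ G` for every
`B ∉ G`. This `G` is the root of a canonical model whose states are the prime sets `T` closed
under the theorems of `G`, modus ponens for `→`, and modus ponens for `⊃` with antecedent in
`G`: like the semantics, such a state consults only the root to evaluate `⊃`. Relative to `G`
the conditional `→` has a deduction theorem (Ax1, Ax2, AxM4), so a second Lindenbaum argument
yields the truth lemma `I(T, B) = 1 ↔ B ∈ T`, and the root falsifies `A` while satisfying `Γ`.
-/

section Lindenbaum

variable {α : Type*} {derives : Set α → α → Prop}

theorem exists_maximal_not_derives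
    (hcompact : ∀ c : Set (Set α), IsChain (· ⊆ ·) c → c.Nonempty →
      ∀ {a}, derives (⋃₀ c) a → ∃ t ∈ c, derives t a)
    {s : Set α} {a : α} (hs : ¬ derives s a) :
    ∃ m, s ⊆ m ∧ ¬ derives m a ∧ ∀ b ∉ m, derives (insert b m) a := by
  have hchain : ∀ c ⊆ {t | ¬ derives t a}, IsChain (· ⊆ ·) c → c.Nonempty →
      ∃ u ∈ {t | ¬ derives t a}, ∀ t ∈ c, t ⊆ u := fun c hc hchain hne =>
    ⟨⋃₀ c, fun hd => (hcompact c hchain hne hd).elim fun t ⟨ht, hta⟩ => hc ht hta,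
      fun t ht => Set.subset_sUnion_of_mem ht⟩
  obtain ⟨m, hsm, hmax⟩ := zorn_subset_nonempty _ hchain s hs
  refine ⟨m, hsm, hmax.prop, fun b hb => by_contra fun hbm => hb ?_⟩
  exact hmax.eq_of_superset hbm (Set.subset_insert b m) ▸ Set.mem_insert b m

end Lindenbaum

namespace SDeriv

variable {Γ Δ : Set Formula} {A B C : Formula}

@[elab_as_elim]
theorem induction {motive : Formula → Prop} (h : SDeriv Γ A)
    (hyp : ∀ {B}, B ∈ Γ → motive B) (closed : ∀ {B}, (∀ Δ, SDeriv Δ B) → motive B)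
    (mp : ∀ {B C}, motive B → motive (B.sup C) → motive C) : motive A := by
  induction h with
  | hyp hA => exact hyp hA
  | mp _ _ ih₁ ih₂ => exact mp ih₁ ih₂
  | ax1 => exact closed fun _ => .ax1 _ _
  | ax2 => exact closed fun _ => .ax2 _ _ _
  | ax3 => exact closed fun _ => .ax3 _ _
  | ax4 => exact closed fun _ => .ax4 _ _
  | ax5 => exact closed fun _ => .ax5 _ _ _
  | ax6 => exact closed fun _ => .ax6 _ _
  | ax7 => exact closed fun _ => .ax7 _ _
  | ax8 => exact closed fun _ => .ax8 _ _ _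
  | axM1 => exact closed fun _ => .axM1 _ _
  | axM2 => exact closed fun _ => .axM2 _ _ _
  | axM3 => exact closed fun _ => .axM3 _ _ _
  | axM4 => exact closed fun _ => .axM4 _ _ _
  | axM5 => exact closed fun _ => .axM5 _ _ _
  | axM6 => exact closed fun _ => .axM6 _ _ _

theorem mono (h : SDeriv Γ A) (hΓΔ : Γ ⊆ Δ) : SDeriv Δ A :=
  h.induction (fun hB => .hyp (hΓΔ hB)) (fun hB => hB Δ) .mp

theorem exists_mem_of_sUnion {c : Set (Set Formula)} (hc : IsChain (· ⊆ ·) c)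
    (hne : c.Nonempty) (h : SDeriv (⋃₀ c) A) : ∃ t ∈ c, SDeriv t A := by
  refine h.induction (fun ⟨t, ht, hB⟩ => ⟨t, ht, .hyp hB⟩)
    (fun hB => ⟨hne.some, hne.some_mem, hB _⟩) ?_
  rintro B C ⟨t₁, ht₁, h₁⟩ ⟨t₂, ht₂, h₂⟩
  obtain ⟨t, ht, ht₁t, ht₂t⟩ := hc.directedOn t₁ ht₁ t₂ ht₂
  exact ⟨t, ht, .mp (h₁.mono ht₁t) (h₂.mono ht₂t)⟩

theorem sup_of_imp (h : SDeriv Γ (A.imp B)) : SDeriv Γ (A.sup B) := .mp h (.axM1 A B)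

theorem mp_imp (h : SDeriv Γ (A.imp B)) (hA : SDeriv Γ A) : SDeriv Γ B := .mp hA h.sup_of_imp

theorem imp_self (Γ : Set Formula) (A : Formula) : SDeriv Γ (A.imp A) :=
  ((SDeriv.ax2 A (A.imp A) A).mp_imp (.ax1 A (A.imp A))).mp_imp (.ax1 A A)

theorem sup_intro (A : Formula) (h : SDeriv Γ B) : SDeriv Γ (A.sup B) :=
  ((SDeriv.ax1 B A).mp_imp h).sup_of_imp

theorem imp_sup_self (Γ : Set Formula) (A B : Formula) : SDeriv Γ (B.imp (A.sup B)) :=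
  (SDeriv.axM3 A B B).mp_imp (sup_intro A (imp_self Γ B))

theorem sup_of_insert (h : SDeriv (insert A Γ) B) : SDeriv Γ (A.sup B) := by
  refine h.induction (fun hB => ?_) (fun hB => sup_intro A (hB Γ))
    fun h₁ h₂ => .mp h₁ ((SDeriv.axM2 _ _ _).mp_imp h₂)
  rcases hB with rfl | hB
  · exact (imp_self Γ _).sup_of_imp
  · exact sup_intro A (.hyp hB)

end SDeriv

/-- Derivability at a state `T` of the canonical model with root `G`. -/
inductive RelDeriv (G T : Set Formula) : Formula → Prop
  | hyp {B} : B ∈ T → RelDeriv G T B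
  | of_sDeriv {B} : SDeriv G B → RelDeriv G T B
  | mp_imp {A B} : RelDeriv G T A → RelDeriv G T (A.imp B) → RelDeriv G T B
  | mp_sup {A B} : SDeriv G A → RelDeriv G T (A.sup B) → RelDeriv G T B

namespace RelDeriv

variable {G T U : Set Formula} {A B C : Formula}

theorem mono (h : RelDeriv G T B) (hTU : T ⊆ U) : RelDeriv G U B := by
  induction h with
  | hyp hB => exact .hyp (hTU hB)
  | of_sDeriv hB => exact .of_sDeriv hB
  | mp_imp _ _ ih₁ ih₂ => exact .mp_imp ih₁ ih₂
  | mp_sup hA _ ih => exact .mp_sup hA ih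

theorem exists_mem_of_sUnion {c : Set (Set Formula)} (hc : IsChain (· ⊆ ·) c)
    (hne : c.Nonempty) (h : RelDeriv G (⋃₀ c) B) : ∃ t ∈ c, RelDeriv G t B := by
  induction h with
  | hyp hB =>
    obtain ⟨t, ht, hBt⟩ := hB
    exact ⟨t, ht, .hyp hBt⟩
  | of_sDeriv hB => exact ⟨hne.some, hne.some_mem, .of_sDeriv hB⟩
  | mp_imp _ _ ih₁ ih₂ =>
    obtain ⟨t₁, ht₁, h₁⟩ := ih₁
    obtain ⟨t₂, ht₂, h₂⟩ := ih₂
    obtain ⟨t, ht, ht₁t, ht₂t⟩ := hc.directedOn t₁ ht₁ t₂ ht₂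
    exact ⟨t, ht, .mp_imp (h₁.mono ht₁t) (h₂.mono ht₂t)⟩
  | mp_sup hA _ ih =>
    obtain ⟨t, ht, h⟩ := ih
    exact ⟨t, ht, .mp_sup hA h⟩

theorem imp_intro (A : Formula) (h : RelDeriv G T B) : RelDeriv G T (A.imp B) :=
  .mp_imp h (.of_sDeriv (.ax1 B A))

theorem and_intro (hA : RelDeriv G T A) (hB : RelDeriv G T B) : RelDeriv G T (A.and B) :=
  .mp_imp hB (.mp_imp (.of_sDeriv (SDeriv.imp_self G B))
    (.mp_imp (imp_intro B hA) (.of_sDeriv (.ax5 A B B))))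

theorem imp_of_insert (h : RelDeriv G (insert A T) B) : RelDeriv G T (A.imp B) := by
  induction h with
  | hyp hB =>
    rcases hB with rfl | hB
    · exact .of_sDeriv (SDeriv.imp_self G _)
    · exact imp_intro A (.hyp hB)
  | of_sDeriv hB => exact imp_intro A (.of_sDeriv hB)
  | mp_imp _ _ ih₁ ih₂ => exact .mp_imp ih₁ (.mp_imp ih₂ (.of_sDeriv (.ax2 _ _ _)))
  | mp_sup hX _ ih => exact .mp_sup hX (.mp_imp ih (.of_sDeriv (.axM4 _ _ _)))

theorem cut (h : RelDeriv G (insert A T) B) (hA : RelDeriv G T A) : RelDeriv G T B :=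
  .mp_imp hA (imp_of_insert h)

theorem sDeriv_of_self (h : RelDeriv G G B) : SDeriv G B := by
  induction h with
  | hyp hB => exact .hyp hB
  | of_sDeriv hB => exact hB
  | mp_imp _ _ ih₁ ih₂ => exact ih₂.mp_imp ih₁
  | mp_sup hA _ ih => exact .mp hA ih

end RelDeriv

structure IsWorld (G T : Set Formula) : Prop where
  closed : ∀ {B}, RelDeriv G T B → B ∈ T
  prime : ∀ {B C}, B.or C ∈ T → B ∈ T ∨ C ∈ T

theorem RelDeriv.exists_isWorld {G T : Set Formula} {C : Formula} (h : ¬ RelDeriv G T C) :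
    ∃ U, T ⊆ U ∧ IsWorld G U ∧ C ∉ U := by
  obtain ⟨M, hTM, hMC, hmax⟩ := exists_maximal_not_derives
    (fun c hc hne _ => RelDeriv.exists_mem_of_sUnion hc hne) h
  have closed : ∀ {B}, RelDeriv G M B → B ∈ M := fun hB =>
    by_contra fun hBM => hMC ((hmax _ hBM).cut hB)
  refine ⟨M, hTM, ⟨closed, fun {A B} hAB => ?_⟩, fun hC => hMC (.hyp hC)⟩
  by_contra! ⟨hA, hB⟩
  exact hMC (.mp_imp (.hyp hAB) (.mp_imp (hmax B hB).imp_of_insert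
    (.mp_imp (hmax A hA).imp_of_insert (.of_sDeriv (.ax8 A B C)))))

structure IsRoot (G : Set Formula) : Prop where
  closed : ∀ {B}, SDeriv G B → B ∈ G
  sup_mem : ∀ {B} (C : Formula), B ∉ G → B.sup C ∈ G

theorem IsRoot.isWorld {G : Set Formula} (hG : IsRoot G) : IsWorld G G := by
  refine ⟨fun hB => hG.closed hB.sDeriv_of_self, fun {A B} hAB => ?_⟩
  by_contra! ⟨hA, hB⟩
  -- `A ⊃ B ∈ G` as `A ∉ G`, and `B ⊃ B` is a theorem, so AxM6 gives `(A ∨ B) ⊃ B`.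
  refine hB (hG.closed (.mp (.hyp hAB) ?_))
  exact ((SDeriv.axM6 A B B).mp_imp (.hyp (hG.sup_mem B hA))).mp_imp
    (SDeriv.imp_self G B).sup_of_imp

theorem exists_isRoot_superset {Γ : Set Formula} {A : Formula} (h : ¬ SDeriv Γ A) :
    ∃ G, Γ ⊆ G ∧ A ∉ G ∧ IsRoot G := by
  obtain ⟨G, hΓG, hGA, hmax⟩ := exists_maximal_not_derives
    (fun c hc hne _ => SDeriv.exists_mem_of_sUnion hc hne) h
  have sup_A : ∀ {B}, B ∉ G → SDeriv G (B.sup A) := fun hB => SDeriv.sup_of_insert (hmax _ hB)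
  refine ⟨G, hΓG, fun hA => hGA (.hyp hA),
    ⟨fun hB => by_contra fun hBG => hGA (.mp hB (sup_A hBG)), fun {B} C hB => ?_⟩⟩
  by_contra hBC
  exact hGA (((SDeriv.axM5 B C A).mp_imp (sup_A hBC)).mp_imp (sup_A hB))

namespace IsWorld

variable {G T : Set Formula} {A B : Formula}

theorem mem_of_sDeriv (hT : IsWorld G T) (h : SDeriv G A) : A ∈ T :=
  hT.closed (.of_sDeriv h)

theorem subset (hT : IsWorld G T) : G ⊆ T :=
  fun _ hA => hT.mem_of_sDeriv (.hyp hA)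

theorem and_mem_iff (hT : IsWorld G T) : A.and B ∈ T ↔ A ∈ T ∧ B ∈ T :=
  ⟨fun h => ⟨hT.closed (.mp_imp (.hyp h) (.of_sDeriv (.ax3 A B))),
      hT.closed (.mp_imp (.hyp h) (.of_sDeriv (.ax4 A B)))⟩,
    fun ⟨hA, hB⟩ => hT.closed (.and_intro (.hyp hA) (.hyp hB))⟩

theorem or_mem_iff (hT : IsWorld G T) : A.or B ∈ T ↔ A ∈ T ∨ B ∈ T :=
  ⟨hT.prime, fun h => h.elim
    (fun hA => hT.closed (.mp_imp (.hyp hA) (.of_sDeriv (.ax6 A B))))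
    (fun hB => hT.closed (.mp_imp (.hyp hB) (.of_sDeriv (.ax7 A B))))⟩

theorem imp_mem_iff (hT : IsWorld G T) :
    A.imp B ∈ T ↔ ∀ U, IsWorld G U → T ⊆ U → A ∈ U → B ∈ U := by
  refine ⟨fun h U hU hTU hA => hU.closed (.mp_imp (.hyp hA) (.hyp (hTU h))), fun h => ?_⟩
  by_contra hAB
  obtain ⟨U, hTU, hU, hBU⟩ := RelDeriv.exists_isWorld fun hd => hAB (hT.closed hd.imp_of_insert)
  exact hBU (h U hU ((Set.subset_insert A T).trans hTU) (hTU (Set.mem_insert A T)))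

theorem sup_mem_iff (hG : IsRoot G) (hT : IsWorld G T) : A.sup B ∈ T ↔ A ∉ G ∨ B ∈ T := by
  refine ⟨fun h => or_iff_not_imp_left.2 fun hA => ?_, ?_⟩
  · exact hT.closed (.mp_sup (.hyp (not_not.1 hA)) (.hyp h))
  · rintro (hA | hB)
    · exact hT.subset (hG.sup_mem B hA)
    · exact hT.closed (.mp_imp (.hyp hB) (.of_sDeriv (SDeriv.imp_sup_self G A B)))

end IsWorld

def canonModel {G : Set Formula} (hG : IsRoot G) : SModel where
  W := {T : Set Formula // IsWorld G T}
  le T U := T.1 ⊆ U.1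
  refl _ := subset_rfl
  trans _ _ _ := Set.Subset.trans
  g := ⟨G, hG.isWorld⟩
  least T := T.2.subset
  V T p := .var p ∈ T.1
  hered _ _ _ hp hTU := hTU hp

theorem sat_canonModel_iff {G : Set Formula} (hG : IsRoot G) (B : Formula)
    (T : (canonModel hG).W) : (canonModel hG).sat B T ↔ B ∈ T.1 := by
  induction B generalizing T with
  | var p => rfl
  | and B C ihB ihC =>
    rw [T.2.and_mem_iff, ← ihB, ← ihC]
    rfl
  | or B C ihB ihC =>
    rw [T.2.or_mem_iff, ← ihB, ← ihC]
    rfl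
  | imp B C ihB ihC =>
    rw [T.2.imp_mem_iff]
    exact ⟨fun h U hU hTU hB => (ihC ⟨U, hU⟩).1 (h ⟨U, hU⟩ hTU ((ihB ⟨U, hU⟩).2 hB)),
      fun h U hTU hB => (ihC U).2 (h U.1 U.2 hTU ((ihB U).1 hB))⟩
  | sup B C ihB ihC =>
    exact (or_congr (not_congr (ihB (canonModel hG).g)) (ihC T)).trans
      (T.2.sup_mem_iff hG).symm

/-- Strong completeness of S: if Γ ⊨ A then Γ ⊢ A. -/
theorem completeness (Γ : Set Formula) (A : Formula)
    (h : SConseq Γ A) : SDeriv Γ A := by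
  by_contra hΓA
  obtain ⟨G, hΓG, hAG, hG⟩ := exists_isRoot_superset hΓA
  have hA := h (canonModel hG) fun B hB => (sat_canonModel_iff hG B _).2 (hΓG hB)
  exact hAG ((sat_canonModel_iff hG A _).1 hA)
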